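/- arXiv:1405.6793 — 2 statements merged into one kernel-verified Lean document; each statement's English description precedes it below -/
import Mathlib

section
/- Let Z be a standard normal random variable. For every fixed real x, p · P(Z^2 > 2·log p − log log p + x) converges to exp(−(x + log π)/2) as the integer p tends to infinity. -/
/-!
Let `φ` be the standard normal density and `t = √u`. By symmetry `P(Z² > u) = 2 ∫_t^∞ φ`.
Since `-(φ s / s)` has derivative `φ s (1 + s⁻²)`, integrating over `(t, ∞)` gives Mills' bounds
`φ t / t ≤ (1 + t⁻²) ∫_t^∞ φ ≤ (1 + t⁻²) φ t / t`, so `∫_t^∞ φ ~ φ t / t`.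
For `u = 2 log p - log log p + x` one has `p φ(√u) = √(log p) e^{-x/2} / √(2π)` exactly, while
`u ~ 2 log p`; hence `2 p φ(√u) / √u → 2 e^{-x/2} / (√(2π) √2) = e^{-(x + log π)/2}`.
-/

open MeasureTheory ProbabilityTheory Filter Real Asymptotics Set Topology

local notation "φ" => gaussianPDFReal 0 1

lemma gaussianPDFReal_zero_one : φ = fun s => (√(2 * π))⁻¹ * exp (-s ^ 2 / 2) := by
  ext s
  simp [gaussianPDFReal]

lemma hasDerivAt_gaussianPDFReal_zero_one (s : ℝ) : HasDerivAt φ (-s * φ s) s := by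
  have h : HasDerivAt (fun s : ℝ => -s ^ 2 / 2) (-s) s :=
    ((hasDerivAt_pow 2 s).neg.div_const 2).congr_deriv (by ring)
  rw [gaussianPDFReal_zero_one]
  exact (h.exp.const_mul _).congr_deriv (by ring)

lemma tendsto_gaussianPDFReal_zero_one_atTop : Tendsto φ atTop (𝓝 0) := by
  have h : Tendsto (fun s : ℝ => -s ^ 2 / 2) atTop atBot :=
    (tendsto_neg_atTop_atBot.comp (tendsto_pow_atTop two_ne_zero)).atBot_div_const two_pos
  rw [gaussianPDFReal_zero_one]
  simpa using (tendsto_exp_atBot.comp h).const_mul (√(2 * π))⁻¹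

lemma hasDerivAt_neg_gaussianPDFReal_div {s : ℝ} (hs : s ≠ 0) :
    HasDerivAt (fun s => -(φ s / s)) (φ s * (1 + (s ^ 2)⁻¹)) s := by
  refine ((hasDerivAt_gaussianPDFReal_zero_one s).div (hasDerivAt_id s) hs).neg.congr_deriv ?_
  simp only [id]
  field_simp
  ring

lemma tendsto_neg_gaussianPDFReal_div_atTop : Tendsto (fun s => -(φ s / s)) atTop (𝓝 0) := by
  simpa [div_eq_mul_inv] using
    (tendsto_gaussianPDFReal_zero_one_atTop.mul tendsto_inv_atTop_zero).neg

lemma gaussianPDFReal_mul_one_add_inv_sq_nonneg (s : ℝ) : 0 ≤ φ s * (1 + (s ^ 2)⁻¹) :=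
  mul_nonneg (gaussianPDFReal_nonneg 0 1 s) (by positivity)

section MillsRatio

variable {t : ℝ} (ht : 0 < t)
include ht

lemma integrableOn_gaussianPDFReal_mul_one_add_inv_sq :
    IntegrableOn (fun s => φ s * (1 + (s ^ 2)⁻¹)) (Ioi t) :=
  integrableOn_Ioi_deriv_of_nonneg'
    (fun _ hs => hasDerivAt_neg_gaussianPDFReal_div (ht.trans_le hs).ne')
    (fun s _ => gaussianPDFReal_mul_one_add_inv_sq_nonneg s) tendsto_neg_gaussianPDFReal_div_atTop

lemma integral_Ioi_gaussianPDFReal_mul_one_add_inv_sq :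
    ∫ s in Ioi t, φ s * (1 + (s ^ 2)⁻¹) = φ t / t := by
  rw [integral_Ioi_of_hasDerivAt_of_nonneg'
    (fun _ hs => hasDerivAt_neg_gaussianPDFReal_div (ht.trans_le hs).ne')
    (fun s _ => gaussianPDFReal_mul_one_add_inv_sq_nonneg s) tendsto_neg_gaussianPDFReal_div_atTop]
  ring

lemma integral_Ioi_gaussianPDFReal_le : ∫ s in Ioi t, φ s ≤ φ t / t := by
  rw [← integral_Ioi_gaussianPDFReal_mul_one_add_inv_sq ht]
  refine setIntegral_mono_on (integrable_gaussianPDFReal 0 1).integrableOn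
    (integrableOn_gaussianPDFReal_mul_one_add_inv_sq ht) measurableSet_Ioi fun s _ => ?_
  nlinarith [gaussianPDFReal_nonneg 0 1 s, inv_nonneg.2 (sq_nonneg s)]

lemma gaussianPDFReal_div_le_integral_Ioi : φ t / t ≤ (1 + (t ^ 2)⁻¹) * ∫ s in Ioi t, φ s := by
  rw [← integral_Ioi_gaussianPDFReal_mul_one_add_inv_sq ht, ← integral_const_mul]
  refine setIntegral_mono_on (integrableOn_gaussianPDFReal_mul_one_add_inv_sq ht)
    ((integrable_gaussianPDFReal 0 1).integrableOn.const_mul _) measurableSet_Ioi fun s hs => ?_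
  have : (s ^ 2)⁻¹ ≤ (t ^ 2)⁻¹ := by gcongr; exact hs.le
  nlinarith [gaussianPDFReal_nonneg 0 1 s]

end MillsRatio

theorem integral_Ioi_gaussianPDFReal_isEquivalent :
    (fun t => ∫ s in Ioi t, φ s) ~[atTop] fun t => φ t / t := by
  refine isEquivalent_of_tendsto_one ?_
  have hlow : Tendsto (fun t : ℝ => (1 + (t ^ 2)⁻¹)⁻¹) atTop (𝓝 1) := by
    simpa using ((tendsto_inv_atTop_zero.comp (tendsto_pow_atTop (α := ℝ) two_ne_zero)).const_add
      1).inv₀ (by norm_num)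
  have hpos (t : ℝ) (ht : 0 < t) : 0 < φ t / t := div_pos (gaussianPDFReal_pos 0 1 t one_ne_zero) ht
  refine tendsto_of_tendsto_of_tendsto_of_le_of_le' hlow tendsto_const_nhds ?_ ?_
  · filter_upwards [eventually_gt_atTop 0] with t ht
    rw [Pi.div_apply, inv_le_iff_one_le_mul₀' (by positivity), ← mul_div_assoc,
      one_le_div (hpos t ht)]
    exact gaussianPDFReal_div_le_integral_Ioi ht
  · filter_upwards [eventually_gt_atTop 0] with t ht
    rw [Pi.div_apply, div_le_one (hpos t ht)]
    exact integral_Ioi_gaussianPDFReal_le ht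

lemma gaussianReal_Iio_neg (a : ℝ) : gaussianReal 0 1 (Iio (-a)) = gaussianReal 0 1 (Ioi a) := by
  conv_lhs =>
    rw [← neg_zero, ← gaussianReal_map_neg, Measure.map_apply measurable_neg measurableSet_Iio]
  congr 1
  ext z
  simp

lemma gaussianReal_lt_sq {u : ℝ} (hu : 0 ≤ u) :
    (gaussianReal 0 1 {z | u < z ^ 2}).toReal = 2 * ∫ s in Ioi √u, φ s := by
  have hset : {z : ℝ | u < z ^ 2} = Iio (-√u) ∪ Ioi √u := by
    ext z
    rw [mem_ofPred_eq, ← sqrt_lt_sqrt_iff hu, sqrt_sq_eq_abs, lt_abs]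
    simp [lt_neg, or_comm]
  have hdisj : Disjoint (Iio (-√u)) (Ioi √u) :=
    (Iio_disjoint_Ici le_rfl).mono_right (Ioi_subset_Ici (neg_le_self (sqrt_nonneg u)))
  rw [hset, measure_union hdisj measurableSet_Ioi, gaussianReal_Iio_neg, ← two_mul,
    gaussianReal_apply_eq_integral 0 one_ne_zero, ENNReal.toReal_mul, ENNReal.toReal_ofReal
    (setIntegral_nonneg measurableSet_Ioi fun s _ => gaussianPDFReal_nonneg 0 1 s)]
  rfl

noncomputable def chiSqThreshold (x y : ℝ) : ℝ := 2 * log y - log (log y) + x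

lemma isEquivalent_two_mul_sub_log_add (x : ℝ) :
    (fun L => 2 * L - log L + x) ~[atTop] fun L => 2 * L := by
  have ho : (fun L => x - log L) =o[atTop] fun L => 2 * L :=
    ((isLittleO_const_id_atTop x).sub isLittleO_log_id_atTop).const_mul_right two_ne_zero
  refine (ho.add_isEquivalent IsEquivalent.refl).congr_left (.of_forall fun L => ?_)
  simp only [Pi.add_apply]
  ring

lemma tendsto_chiSqThreshold_atTop (x : ℝ) : Tendsto (chiSqThreshold x) atTop atTop :=
  ((isEquivalent_two_mul_sub_log_add x).symm.tendsto_atTop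
    (tendsto_id.const_mul_atTop two_pos)).comp tendsto_log_atTop

lemma tendsto_log_div_chiSqThreshold (x : ℝ) :
    Tendsto (fun y => log y / chiSqThreshold x y) atTop (𝓝 (1 / 2)) := by
  have h := (IsEquivalent.refl (u := fun L : ℝ => L)).div (isEquivalent_two_mul_sub_log_add x)
  have hhalf : Tendsto (fun L : ℝ => L / (2 * L)) atTop (𝓝 (1 / 2)) :=
    tendsto_const_nhds.congr' <| (eventually_ne_atTop 0).mono fun L hL => by field_simp
  exact (h.symm.tendsto_nhds hhalf).comp tendsto_log_atTop

lemma gaussianPDFReal_sqrt_chiSqThreshold {x y : ℝ} (hy : 1 < y) (hu : 0 ≤ chiSqThreshold x y) :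
    φ √(chiSqThreshold x y) = (√(2 * π))⁻¹ * (y⁻¹ * √(log y) * exp (-x / 2)) := by
  have hexp : -chiSqThreshold x y / 2 = -log y + (log (log y) / 2 + -x / 2) := by
    rw [chiSqThreshold]; ring
  simp only [gaussianPDFReal_zero_one, sq_sqrt hu]
  rw [hexp, exp_add, exp_add, exp_neg, exp_log (by linarith),
    exp_half, exp_log (log_pos hy)]
  ring

lemma tendsto_mul_gaussianPDFReal_sqrt_chiSqThreshold (x : ℝ) :
    Tendsto (fun y => 2 * y * (φ √(chiSqThreshold x y) / √(chiSqThreshold x y))) atTop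
      (𝓝 (exp (-(x + log π) / 2))) := by
  have hlim : 2 * (√(2 * π))⁻¹ * exp (-x / 2) * √(1 / 2) = exp (-(x + log π) / 2) := by
    have hπ : exp (-log π / 2) = (√π)⁻¹ := by rw [exp_half, exp_neg, exp_log pi_pos, sqrt_inv]
    rw [neg_add, add_div, exp_add, hπ, sqrt_mul zero_le_two, one_div, sqrt_inv]
    field_simp
    rw [sq_sqrt zero_le_two]
  rw [← hlim]
  refine ((tendsto_log_div_chiSqThreshold x).sqrt.const_mul _).congr' ?_
  filter_upwards [eventually_gt_atTop 1, (tendsto_chiSqThreshold_atTop x).eventually_gt_atTop 0]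
    with y hy hu
  rw [gaussianPDFReal_sqrt_chiSqThreshold hy hu.le, sqrt_div (log_pos hy).le]
  field_simp

theorem scaled_chi_sq_tail_tendsto_general
    {Ω : Type*} [MeasurableSpace Ω] (P : Measure Ω)
    (Z : Ω → ℝ) (hmeas : Measurable Z)
    (hdist : Measure.map Z P = gaussianReal 0 1)
    (x : ℝ) :
    Tendsto
      (fun p : ℕ =>
        (p : ℝ) * (P {ω | 2 * Real.log p - Real.log (Real.log p) + x < (Z ω) ^ 2}).toReal)
      atTop (nhds (Real.exp (-(x + Real.log π) / 2))) := by
  have hu : Tendsto (fun p : ℕ => chiSqThreshold x p) atTop atTop :=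
    (tendsto_chiSqThreshold_atTop x).comp tendsto_natCast_atTop_atTop
  have hlaw (u : ℝ) (h0 : 0 ≤ u) : (P {ω | u < Z ω ^ 2}).toReal = 2 * ∫ s in Ioi √u, φ s := by
    rw [← gaussianReal_lt_sq h0, ← hdist,
      Measure.map_apply hmeas (measurableSet_lt measurable_const (by fun_prop))]
    rfl
  have htail :=
    integral_Ioi_gaussianPDFReal_isEquivalent.comp_tendsto (tendsto_sqrt_atTop.comp hu)
  have hequiv : (fun p : ℕ => (p : ℝ) * (P {ω | chiSqThreshold x p < Z ω ^ 2}).toReal) ~[atTop]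
      fun p : ℕ => 2 * p * (φ √(chiSqThreshold x p) / √(chiSqThreshold x p)) := by
    refine ((IsEquivalent.refl (u := fun p : ℕ => 2 * (p : ℝ))).mul htail).congr_left ?_
    filter_upwards [hu.eventually_ge_atTop 0] with p hp
    simp only [Pi.mul_apply, Function.comp, hlaw _ hp]
    ring
  exact hequiv.tendsto_nhds_iff.2
    ((tendsto_mul_gaussianPDFReal_sqrt_chiSqThreshold x).comp tendsto_natCast_atTop_atTop)

/-- If `Z` is a standard normal random variable, then for every fixed real `x`,
`p · P(Z² > 2 log p − log log p + x) → exp(−(x + log π)/2)` as the integer `p → ∞`. -/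
theorem scaled_chi_sq_tail_tendsto
    {Ω : Type*} [MeasurableSpace Ω] (P : Measure Ω) [IsProbabilityMeasure P]
    (Z : Ω → ℝ) (hmeas : Measurable Z)
    (hdist : Measure.map Z P = gaussianReal 0 1)
    (x : ℝ) :
    Tendsto
      (fun p : ℕ =>
        (p : ℝ) * (P {ω | 2 * Real.log p - Real.log (Real.log p) + x < (Z ω) ^ 2}).toReal)
      atTop (nhds (Real.exp (-(x + Real.log π) / 2))) :=
  scaled_chi_sq_tail_tendsto_general P Z hmeas hdist x
end

section
/- Fix α ∈ (0, 1) and let q_{1−α} = −log π − 2·log(−log(1 − α)), which is the (1−α)-quantile of the Gumbel(−log π, 2) distribution. Let (Z_i)_{i≥1} be i.i.d. standard normal random variables and set T̃_p = max_{1≤i≤p} Z_i² − 2·log p + log log p. Then P(T̃_p ≥ q_{1−α}) → α as p → ∞; that is, the test that rejects when T̃_p ≥ q_{1−α} has asymptotic level exactly α. -/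
open MeasureTheory ProbabilityTheory Filter Real
open Set
open scoped Topology

/-!
Write `c_p = q + 2 log p - log log p`, so that the test rejects iff `max_{i ≤ p} Z_i² ≥ c_p`.
By independence the rejection probability is `1 - (1 - g_p) ^ p` with `g_p = P(Z² ≥ c_p)`.
The Mills-ratio asymptotics `∫_s^∞ exp (-x² / 2) dx ∼ exp (-s² / 2) / s` give
`p g_p → exp (-q / 2) / √π`, and this equals `-log (1 - α)` for the Gumbel quantile `q`;
hence `(1 - g_p) ^ p → 1 - α`.
-/

lemma sqrt_eq_exp_log_div_two {x : ℝ} (hx : 0 < x) : √x = exp (log x / 2) := by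
  rw [sqrt_eq_rpow, rpow_def_of_pos hx]
  ring_nf

lemma hasDerivAt_exp_neg_sq_div_two (x : ℝ) :
    HasDerivAt (fun y : ℝ => exp (-y ^ 2 / 2)) (-x * exp (-x ^ 2 / 2)) x := by
  have h : HasDerivAt (fun y : ℝ => -y ^ 2 / 2) (-x) x :=
    ((hasDerivAt_pow 2 x).neg.div_const 2).congr_deriv (by push_cast; ring)
  exact h.exp.congr_deriv (mul_comm _ _)

lemma tendsto_exp_neg_sq_div_two_atTop :
    Tendsto (fun y : ℝ => exp (-y ^ 2 / 2)) atTop (𝓝 0) :=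
  tendsto_exp_atBot.comp <| (tendsto_div_const_atBot_of_pos two_pos).mpr <|
    tendsto_neg_atTop_atBot.comp (tendsto_pow_atTop two_ne_zero)

lemma integrableOn_Ioi_mul_exp_neg_sq_div_two {s : ℝ} (hs : 0 ≤ s) :
    IntegrableOn (fun x : ℝ => x * exp (-x ^ 2 / 2)) (Ioi s) := by
  simpa using integrableOn_Ioi_deriv_of_nonneg' (g := fun y => -exp (-y ^ 2 / 2))
    (fun x _ => (hasDerivAt_exp_neg_sq_div_two x).neg)
    (fun x hx => by simpa using mul_nonneg (hs.trans (le_of_lt hx)) (exp_nonneg _))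
    (by simpa using tendsto_exp_neg_sq_div_two_atTop.neg)

lemma integral_Ioi_mul_exp_neg_sq_div_two {s : ℝ} (hs : 0 ≤ s) :
    ∫ x in Ioi s, x * exp (-x ^ 2 / 2) = exp (-s ^ 2 / 2) := by
  simpa using integral_Ioi_of_hasDerivAt_of_nonneg' (g := fun y => -exp (-y ^ 2 / 2)) (l := 0)
    (fun x _ => (hasDerivAt_exp_neg_sq_div_two x).neg)
    (fun x hx => by simpa using mul_nonneg (hs.trans (le_of_lt hx)) (exp_nonneg _))
    (by simpa using tendsto_exp_neg_sq_div_two_atTop.neg)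

lemma integrableOn_Ioi_exp_neg_sq_div_two (s : ℝ) :
    IntegrableOn (fun x : ℝ => exp (-x ^ 2 / 2)) (Ioi s) := by
  simpa [neg_div, div_eq_inv_mul] using
    (integrable_exp_neg_mul_sq (b := 1 / 2) (by norm_num)).integrableOn (s := Ioi s)

lemma integral_Ioi_exp_neg_sq_div_two_le {s : ℝ} (hs : 0 < s) :
    ∫ x in Ioi s, exp (-x ^ 2 / 2) ≤ exp (-s ^ 2 / 2) / s := by
  calc ∫ x in Ioi s, exp (-x ^ 2 / 2) ≤ ∫ x in Ioi s, s⁻¹ * (x * exp (-x ^ 2 / 2)) := by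
        refine setIntegral_mono_on (integrableOn_Ioi_exp_neg_sq_div_two s)
          ((integrableOn_Ioi_mul_exp_neg_sq_div_two hs.le).const_mul _) measurableSet_Ioi
          fun x hx => ?_
        rw [← mul_assoc]
        refine le_mul_of_one_le_left (exp_nonneg _) ?_
        rw [inv_mul_eq_div, one_le_div hs]
        exact le_of_lt hx
    _ = exp (-s ^ 2 / 2) / s := by
        rw [integral_const_mul, integral_Ioi_mul_exp_neg_sq_div_two hs.le, inv_mul_eq_div]

lemma le_integral_Ioi_exp_neg_sq_div_two {s : ℝ} (hs : 2 ≤ s) :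
    (s⁻¹ - (s ^ 3)⁻¹) * exp (-s ^ 2 / 2) ≤ ∫ x in Ioi s, exp (-x ^ 2 / 2) := by
  set g : ℝ → ℝ := fun y => -((y⁻¹ - (y ^ 3)⁻¹) * exp (-y ^ 2 / 2))
  have hderiv : ∀ x ∈ Ici s, HasDerivAt g ((1 - 3 / x ^ 4) * exp (-x ^ 2 / 2)) x := by
    intro x hx
    have hx0 : x ≠ 0 := (show 0 < x by linarith [hx.out]).ne'
    refine ((((hasDerivAt_inv hx0).sub ((hasDerivAt_pow 3 x).inv (pow_ne_zero 3 hx0))).mul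
      (hasDerivAt_exp_neg_sq_div_two x)).neg).congr_deriv ?_
    simp only [Pi.sub_apply, Pi.inv_apply]
    field_simp
    ring
  have hnonneg : ∀ x ∈ Ioi s, 0 ≤ (1 - 3 / x ^ 4) * exp (-x ^ 2 / 2) := by
    intro x hx
    have hx2 : 2 ≤ x := hs.trans (le_of_lt hx)
    have h16 : 2 ^ 4 ≤ x ^ 4 := by gcongr
    refine mul_nonneg ?_ (exp_nonneg _)
    rw [sub_nonneg, div_le_one (by positivity)]
    linarith
  have hlim : Tendsto g atTop (𝓝 0) := by
    simpa using ((tendsto_inv_atTop_zero.sub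
      (tendsto_pow_atTop (α := ℝ) three_ne_zero).inv_tendsto_atTop).mul
        tendsto_exp_neg_sq_div_two_atTop).neg
  calc (s⁻¹ - (s ^ 3)⁻¹) * exp (-s ^ 2 / 2)
      = ∫ x in Ioi s, (1 - 3 / x ^ 4) * exp (-x ^ 2 / 2) := by
        rw [integral_Ioi_of_hasDerivAt_of_nonneg' hderiv hnonneg hlim, zero_sub, neg_neg]
    _ ≤ ∫ x in Ioi s, exp (-x ^ 2 / 2) :=
        setIntegral_mono_on (integrableOn_Ioi_deriv_of_nonneg' hderiv hnonneg hlim)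
          (integrableOn_Ioi_exp_neg_sq_div_two s) measurableSet_Ioi fun x _ =>
            mul_le_of_le_one_left (exp_nonneg _) (sub_le_self _ (by positivity))

theorem tendsto_mul_exp_mul_integral_Ioi_exp_neg_sq_div_two :
    Tendsto (fun s : ℝ => s * exp (s ^ 2 / 2) * ∫ x in Ioi s, exp (-x ^ 2 / 2)) atTop (𝓝 1) := by
  have hlower : Tendsto (fun s : ℝ => 1 - (s ^ 2)⁻¹) atTop (𝓝 1) := by
    simpa using tendsto_const_nhds.sub (tendsto_pow_atTop (α := ℝ) two_ne_zero).inv_tendsto_atTop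
  refine tendsto_of_tendsto_of_tendsto_of_le_of_le' hlower tendsto_const_nhds ?_ ?_
  · filter_upwards [eventually_ge_atTop 2] with s hs
    have hs0 : 0 < s := by linarith
    calc 1 - (s ^ 2)⁻¹ = s * exp (s ^ 2 / 2) * ((s⁻¹ - (s ^ 3)⁻¹) * exp (-s ^ 2 / 2)) := by
          rw [neg_div, exp_neg]; field_simp
      _ ≤ _ := by gcongr; exact le_integral_Ioi_exp_neg_sq_div_two hs
  · filter_upwards [eventually_gt_atTop 0] with s hs
    calc s * exp (s ^ 2 / 2) * ∫ x in Ioi s, exp (-x ^ 2 / 2)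
        ≤ s * exp (s ^ 2 / 2) * (exp (-s ^ 2 / 2) / s) := by
          gcongr; exact integral_Ioi_exp_neg_sq_div_two_le hs
      _ = 1 := by rw [neg_div, exp_neg]; field_simp

lemma setOf_le_sq_eq (t : ℝ) : {x : ℝ | t ≤ x ^ 2} = Iic (-√t) ∪ Ici √t := by
  ext x
  rw [mem_ofPred_eq, ← sqrt_le_sqrt_iff (sq_nonneg x), sqrt_sq_eq_abs, le_abs']
  rfl

lemma gaussianReal_setOf_le_sq {t : ℝ} (ht : 0 < t) :
    (gaussianReal 0 1).real {x | t ≤ x ^ 2} =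
      2 * (√(2 * π))⁻¹ * ∫ x in Ioi √t, exp (-x ^ 2 / 2) := by
  have hpdf : gaussianPDFReal 0 1 = fun x => (√(2 * π))⁻¹ * exp (-x ^ 2 / 2) := by
    ext x; simp [gaussianPDFReal]
  have hint := (integrable_gaussianPDFReal 0 1).integrableOn (s := Iic (-√t))
  have hint' := (integrable_gaussianPDFReal 0 1).integrableOn (s := Ici √t)
  have hdisj : Disjoint (Iic (-√t)) (Ici √t) :=
    Iic_disjoint_Ici.mpr (neg_lt_self (sqrt_pos.mpr ht)).not_ge
  have hsymm : ∫ x in Iic (-√t), gaussianPDFReal 0 1 x = ∫ x in Ioi √t, gaussianPDFReal 0 1 x := by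
    rw [← neg_neg √t, ← integral_comp_neg_Iic, neg_neg]
    simp [hpdf]
  rw [measureReal_def, gaussianReal_apply_eq_integral 0 one_ne_zero,
    ENNReal.toReal_ofReal (setIntegral_nonneg (measurableSet_le measurable_const (by fun_prop))
      fun x _ => gaussianPDFReal_nonneg 0 1 x),
    setOf_le_sq_eq t, setIntegral_union hdisj measurableSet_Ici hint hint', hsymm,
    integral_Ici_eq_integral_Ioi, hpdf, integral_const_mul]
  ring

noncomputable def critValue (q x : ℝ) : ℝ := q + 2 * log x - log (log x)

section critValue

variable (q : ℝ)

lemma tendsto_critValue_div_log : Tendsto (fun x => critValue q x / log x) atTop (𝓝 2) := by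
  have hloglog : Tendsto (fun x : ℝ => log (log x) / log x) atTop (𝓝 0) :=
    isLittleO_log_id_atTop.tendsto_div_nhds_zero.comp tendsto_log_atTop
  have hsum :=
    ((tendsto_const_nhds (x := q)).div_atTop tendsto_log_atTop).add_const 2 |>.sub hloglog
  rw [zero_add, sub_zero] at hsum
  refine hsum.congr' ?_
  filter_upwards [tendsto_log_atTop.eventually_gt_atTop 0] with x hx
  rw [critValue]
  field_simp

lemma tendsto_critValue_atTop : Tendsto (critValue q) atTop atTop := by
  refine ((tendsto_critValue_div_log q).pos_mul_atTop two_pos tendsto_log_atTop).congr' ?_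
  filter_upwards [tendsto_log_atTop.eventually_gt_atTop 0] with x hx
  field_simp

lemma exp_critValue_div_two {x : ℝ} (hx : 1 < x) :
    exp (critValue q x / 2) = exp (q / 2) * x / √(log x) := by
  rw [eq_div_iff (sqrt_pos.mpr (log_pos hx)).ne', sqrt_eq_exp_log_div_two (log_pos hx), ← exp_add]
  conv_rhs => rw [← exp_log (zero_lt_one.trans hx), ← exp_add]
  congr 1
  rw [critValue]
  ring

end critValue

lemma two_mul_inv_sqrt_two_pi_mul_sqrt_inv_two : 2 * (√(2 * π))⁻¹ * √2⁻¹ = (√π)⁻¹ := by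
  rw [sqrt_mul zero_le_two, sqrt_inv]
  have h2 : √2 * √2 = 2 := mul_self_sqrt zero_le_two
  have : 0 < √2 := by positivity
  have : 0 < √π := sqrt_pos.mpr pi_pos
  field_simp
  linarith

theorem tendsto_mul_gaussianReal_critValue_le_sq (q : ℝ) :
    Tendsto (fun x : ℝ => x * (gaussianReal 0 1).real {y | critValue q x ≤ y ^ 2})
      atTop (𝓝 (exp (-q / 2) / √π)) := by
  have hmills := tendsto_mul_exp_mul_integral_Ioi_exp_neg_sq_div_two.comp
    (tendsto_sqrt_atTop.comp (tendsto_critValue_atTop q))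
  have hrest : Tendsto (fun x => 2 * (√(2 * π))⁻¹ * exp (-q / 2) * √(log x / critValue q x))
      atTop (𝓝 (exp (-q / 2) / √π)) := by
    have := ((continuous_sqrt.tendsto _).comp
      ((tendsto_critValue_div_log q).inv₀ two_ne_zero)).const_mul (2 * (√(2 * π))⁻¹ * exp (-q / 2))
    convert this using 2 with x
    · simp [inv_div]
    · rw [mul_right_comm, two_mul_inv_sqrt_two_pi_mul_sqrt_inv_two, div_eq_inv_mul, mul_comm]
  refine (one_mul (exp (-q / 2) / √π) ▸ hmills.mul hrest).congr' ?_
  filter_upwards [(tendsto_critValue_atTop q).eventually_gt_atTop 0, eventually_gt_atTop 1]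
    with x hcrit hx
  have hlog : 0 < log x := log_pos hx
  simp only [Function.comp_apply, sq_sqrt hcrit.le, gaussianReal_setOf_le_sq hcrit]
  rw [sqrt_div hlog.le, exp_critValue_div_two q hx, neg_div, exp_neg]
  field_simp

lemma ciSup_lt_iff_of_finite {ι α : Type*} [ConditionallyCompleteLinearOrder α] [Finite ι]
    [Nonempty ι] {f : ι → α} {a : α} : ⨆ i, f i < a ↔ ∀ i, f i < a := by
  obtain ⟨j, hj⟩ := exists_eq_ciSup_of_finite (f := f)
  exact ⟨fun h i => (le_ciSup (Finite.bddAbove_range f) i).trans_lt h, fun h => hj ▸ h j⟩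

section IID

variable {Ω β : Type*} [MeasurableSpace Ω] [MeasurableSpace β] {P : Measure Ω} {X : ℕ → Ω → β}
  {μ : Measure β}

lemma ProbabilityTheory.iIndepFun.measureReal_biInter_preimage_eq_pow (hX : ∀ i, Measurable (X i))
    (hindep : iIndepFun X P) (hdist : ∀ i, P.map (X i) = μ) {S : Set β} (hS : MeasurableSet S)
    (p : ℕ) : P.real (⋂ i ∈ Finset.range p, X i ⁻¹' S) = μ.real S ^ p := by
  have hlaw : ∀ i, P (X i ⁻¹' S) = μ S := fun i => by rw [← hdist i, Measure.map_apply (hX i) hS]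
  rw [measureReal_def, hindep.meas_biInter fun i _ => ⟨S, hS, rfl⟩,
    Finset.prod_congr rfl fun i _ => hlaw i, Finset.prod_const, Finset.card_range, ENNReal.toReal_pow, measureReal_def]

lemma ProbabilityTheory.iIndepFun.measureReal_le_iSup_eq_one_sub_pow [IsProbabilityMeasure P]
    (hX : ∀ i, Measurable (X i)) (hindep : iIndepFun X P) (hdist : ∀ i, P.map (X i) = μ)
    {f : β → ℝ} (hf : Measurable f) {p : ℕ} (hp : 0 < p) (a : ℝ) :
    P.real {ω | a ≤ ⨆ i : Fin p, f (X i ω)} = 1 - (1 - μ.real {x | a ≤ f x}) ^ p := by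
  have : IsProbabilityMeasure μ := hdist 0 ▸ Measure.isProbabilityMeasure_map (hX 0).aemeasurable
  have : Nonempty (Fin p) := ⟨⟨0, hp⟩⟩
  have hS : MeasurableSet {x | f x < a} := measurableSet_lt hf measurable_const
  have hset :
      {ω | a ≤ ⨆ i : Fin p, f (X i ω)} = (⋂ i ∈ Finset.range p, X i ⁻¹' {x | f x < a})ᶜ := by
    ext ω
    simp only [mem_ofPred_eq, mem_compl_iff, mem_iInter, mem_preimage, Finset.mem_range]
    rw [← not_lt, ciSup_lt_iff_of_finite, Fin.forall_iff]
  have hcompl : {x | a ≤ f x} = {x | f x < a}ᶜ := by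
    ext x
    simp
  rw [hset, probReal_compl_eq_one_sub ((Finset.range p).measurableSet_biInter fun i _ => hX i hS),
    hindep.measureReal_biInter_preimage_eq_pow hX hdist hS, hcompl, probReal_compl_eq_one_sub hS,
    sub_sub_cancel]

end IID

lemma exp_neg_div_two_div_sqrt_pi {L : ℝ} (hL : 0 < L) :
    exp (-(-log π - 2 * log L) / 2) / √π = L := by
  rw [sqrt_eq_exp_log_div_two pi_pos, ← exp_log hL, ← exp_sub, log_exp]
  congr 1
  ring

/-- Fix `α ∈ (0,1)` and let `q = −log π − 2 log(−log(1−α))` be the `(1−α)`-quantile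
of the `Gumbel(−log π, 2)` distribution.  If `(Z i)` are i.i.d. standard normal and
`T̃_p = max_{1 ≤ i ≤ p} Z_i² − 2 log p + log log p`, then `P(T̃_p ≥ q) → α` as `p → ∞`:
the test rejecting when `T̃_p ≥ q` has asymptotic level exactly `α`. -/
theorem covariance_type_test_asymptotic_level
    {Ω : Type*} [MeasurableSpace Ω] (P : Measure Ω) [IsProbabilityMeasure P]
    (Z : ℕ → Ω → ℝ) (hmeas : ∀ i, Measurable (Z i))
    (hindep : iIndepFun Z P)
    (hdist : ∀ i, Measure.map (Z i) P = gaussianReal 0 1)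
    (α : ℝ) (hα : α ∈ Set.Ioo (0 : ℝ) 1)
    (q : ℝ) (hq : q = -Real.log π - 2 * Real.log (-Real.log (1 - α))) :
    Tendsto
      (fun p : ℕ =>
        (P {ω | q ≤ (⨆ i : Fin p, (Z i ω) ^ 2) - 2 * Real.log p + Real.log (Real.log p)}).toReal)
      atTop (nhds α) := by
  have hL : exp (-q / 2) / √π = -log (1 - α) := by
    rw [hq, exp_neg_div_two_div_sqrt_pi]
    linarith [log_neg (by linarith [hα.2]) (by linarith [hα.1] : 1 - α < 1)]
  have hlim : Tendsto (fun p : ℕ => (p : ℝ) * -(gaussianReal 0 1).real {y | critValue q p ≤ y ^ 2})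
      atTop (𝓝 (log (1 - α))) := by
    have := ((tendsto_mul_gaussianReal_critValue_le_sq q).comp tendsto_natCast_atTop_atTop).neg
    rw [hL, neg_neg] at this
    simpa only [Function.comp_apply, mul_neg] using this
  have hpow := tendsto_one_add_pow_exp_of_tendsto hlim
  rw [exp_log (by linarith [hα.2])] at hpow
  refine (sub_sub_cancel 1 α ▸ hpow.const_sub 1).congr' ?_
  filter_upwards [eventually_gt_atTop 0] with p hp
  have hset : {ω | q ≤ (⨆ i : Fin p, (Z i ω) ^ 2) - 2 * log p + log (log p)} =
      {ω | critValue q p ≤ ⨆ i : Fin p, Z i ω ^ 2} := by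
    ext ω
    simp only [mem_ofPred_eq, critValue]
    constructor <;> intro h <;> linarith
  rw [hset, ← measureReal_def, hindep.measureReal_le_iSup_eq_one_sub_pow hmeas hdist
    (f := fun x => x ^ 2) (measurable_id.pow_const 2) hp]
  ring
end
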